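/- For every k ∈ ℕ there exists A(k) < ∞ such that for all ε ∈ (0,1/2] and every n ∈ ℕ with n ≥ A(k)|log ε|, one has g^{(n)}(1/2 + ε) ≥ 1 − ε^k. -/
import Mathlib


/-- The majority-vote function `g(p) = 3p² − 2p³`; `g^[n]` denotes its `n`-th iterate. -/
noncomputable def gmaj (p : ℝ) : ℝ := 3 * p ^ 2 - 2 * p ^ 3

lemma gmaj_inv {x : ℝ} (h1 : 1/2 ≤ x) (h2 : x ≤ 1) :
    1/2 ≤ gmaj x ∧ gmaj x ≤ 1 ∧ x ≤ gmaj x := by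
  unfold gmaj
  refine ⟨?_, ?_, ?_⟩
  · nlinarith [mul_nonneg (by linarith : (0:ℝ) ≤ x - 1/2)
      (by nlinarith : (0:ℝ) ≤ 1 + 2*x - 2*x^2)]
  · nlinarith [mul_nonneg (sq_nonneg (1 - x)) (by linarith : (0:ℝ) ≤ 1 + 2*x)]
  · nlinarith [mul_nonneg (mul_nonneg (by linarith : (0:ℝ) ≤ x)
      (by linarith : (0:ℝ) ≤ 2*x - 1)) (by linarith : (0:ℝ) ≤ 1 - x)]

lemma gmaj_iter_inv (x : ℝ) (h1 : 1/2 ≤ x) (h2 : x ≤ 1) (n : ℕ) :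
    1/2 ≤ gmaj^[n] x ∧ gmaj^[n] x ≤ 1 := by
  induction n with
  | zero => exact ⟨h1, h2⟩
  | succ n ih =>
    rw [Function.iterate_succ_apply']
    obtain ⟨a, b, _⟩ := gmaj_inv ih.1 ih.2
    exact ⟨a, b⟩

lemma gmaj_iter_mono (x : ℝ) (h1 : 1/2 ≤ x) (h2 : x ≤ 1) {m n : ℕ} (h : m ≤ n) :
    gmaj^[m] x ≤ gmaj^[n] x := by
  induction n with
  | zero => simp_all
  | succ n ih =>
    rcases Nat.lt_or_ge m (n+1) with hlt | hge
    · have hmn := ih (Nat.lt_succ_iff.mp hlt)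
      rw [Function.iterate_succ_apply']
      obtain ⟨hi1, hi2⟩ := gmaj_iter_inv x h1 h2 n
      exact hmn.trans (gmaj_inv hi1 hi2).2.2
    · have : m = n+1 := le_antisymm h hge
      simp [this]

lemma phase1_step {x t : ℝ} (ht : 0 ≤ t) (h1 : 1/2 ≤ x) (h2 : x ≤ 1)
    (h : 3/4 ≤ x ∨ 1/2 + t ≤ x) :
    3/4 ≤ gmaj x ∨ 1/2 + (11/8) * t ≤ gmaj x := by
  unfold gmaj
  rcases h with h | h
  · left
    nlinarith [mul_nonneg (by linarith : (0:ℝ) ≤ x - 3/4)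
      (by nlinarith : (0:ℝ) ≤ 9/8 + 3/2 * x - 2 * x^2)]
  · rcases le_or_gt (3/4) x with hx | hx
    · left
      nlinarith [mul_nonneg (by linarith : (0:ℝ) ≤ x - 3/4)
        (by nlinarith : (0:ℝ) ≤ 9/8 + 3/2 * x - 2 * x^2)]
    · right
      nlinarith [mul_nonneg (by linarith : (0:ℝ) ≤ x - 1/2)
        (by nlinarith : (0:ℝ) ≤ 1/8 - 2 * (x - 1/2)^2)]

lemma phase1_iter {x e : ℝ} (he : 0 ≤ e) (h1 : 1/2 + e ≤ x) (h2 : x ≤ 1) (n : ℕ) :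
    3/4 ≤ gmaj^[n] x ∨ 1/2 + (11/8)^n * e ≤ gmaj^[n] x := by
  have hx1 : 1/2 ≤ x := by linarith
  induction n with
  | zero => right; simpa using h1
  | succ n ih =>
    obtain ⟨hi1, hi2⟩ := gmaj_iter_inv x hx1 h2 n
    rw [Function.iterate_succ_apply']
    have hstep := phase1_step (t := (11/8)^n * e) (by positivity) hi1 hi2 ih
    rcases hstep with h | h
    · left; exact h
    · right
      have heq : (1:ℝ)/2 + (11/8)^(n+1) * e = 1/2 + 11/8 * ((11/8)^n * e) := by ring
      rw [heq]; exact h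

lemma phase2_step {x : ℝ} (h1 : 3/4 ≤ x) (h2 : x ≤ 1) :
    3/4 ≤ gmaj x ∧ gmaj x ≤ 1 ∧ 1 - gmaj x ≤ 3/4 * (1 - x) := by
  unfold gmaj
  refine ⟨?_, ?_, ?_⟩
  · nlinarith [mul_nonneg (by linarith : (0:ℝ) ≤ x - 3/4)
      (by nlinarith : (0:ℝ) ≤ 9/8 + 3/2 * x - 2 * x^2)]
  · nlinarith [mul_nonneg (sq_nonneg (1 - x)) (by linarith : (0:ℝ) ≤ 1 + 2*x)]
  · nlinarith [mul_nonneg (by linarith : (0:ℝ) ≤ 1 - x)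
      (by nlinarith : (0:ℝ) ≤ 2*x^2 - x - 1/4)]

lemma phase2_iter {x : ℝ} (h1 : 3/4 ≤ x) (h2 : x ≤ 1) (n : ℕ) :
    3/4 ≤ gmaj^[n] x ∧ gmaj^[n] x ≤ 1 ∧ 1 - gmaj^[n] x ≤ (3/4)^n * (1 - x) := by
  induction n with
  | zero => exact ⟨h1, h2, by norm_num⟩
  | succ n ih =>
    obtain ⟨a, b, c⟩ := ih
    obtain ⟨a', b', c'⟩ := phase2_step a b
    rw [Function.iterate_succ_apply']
    refine ⟨a', b', ?_⟩
    calc 1 - gmaj (gmaj^[n] x) ≤ 3/4 * (1 - gmaj^[n] x) := c'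
      _ ≤ 3/4 * ((3/4)^n * (1 - x)) := by nlinarith
      _ = (3/4)^(n+1) * (1 - x) := by ring

theorem gmaj_iterate_amplifies (k : ℕ) :
    ∃ A : ℝ, 0 < A ∧
      ∀ ε : ℝ, 0 < ε → ε ≤ 1 / 2 →
        ∀ n : ℕ, A * |Real.log ε| ≤ (n : ℝ) →
          1 - ε ^ k ≤ gmaj^[n] (1 / 2 + ε) := by
  have hc1 : 0 < Real.log (11/8) := Real.log_pos (by norm_num)
  have hc2 : 0 < Real.log (4/3) := Real.log_pos (by norm_num)
  have hl2 : 0 < Real.log 2 := Real.log_pos (by norm_num)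
  refine ⟨1/Real.log (11/8) + k/Real.log (4/3) + 2/Real.log 2, by positivity, ?_⟩
  intro ε hε hε2 n hn
  have hlogε : Real.log ε < 0 := Real.log_neg hε (by linarith)
  set L := |Real.log ε| with hLdef
  have hLeq : L = -Real.log ε := abs_of_neg hlogε
  have hL2 : Real.log 2 ≤ L := by
    rw [hLeq]
    have h := Real.log_le_log hε hε2
    rw [show (1:ℝ)/2 = 2⁻¹ by norm_num, Real.log_inv] at h
    linarith
  have hLpos : 0 < L := lt_of_lt_of_le hl2 hL2
  set n1 := ⌈L / Real.log (11/8)⌉₊ with hn1def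
  set n2 := ⌈(k : ℝ) * L / Real.log (4/3)⌉₊ with hn2def
  have hn1ge : L / Real.log (11/8) ≤ (n1 : ℝ) := Nat.le_ceil _
  have hn2ge : (k : ℝ) * L / Real.log (4/3) ≤ (n2 : ℝ) := Nat.le_ceil _
  have hn1le : (n1 : ℝ) ≤ L / Real.log (11/8) + 1 :=
    (Nat.ceil_lt_add_one (by positivity)).le
  have hn2le : (n2 : ℝ) ≤ (k:ℝ) * L / Real.log (4/3) + 1 :=
    (Nat.ceil_lt_add_one (by positivity)).le
  have hsum : (n2 : ℝ) + (n1 : ℝ) ≤ (n : ℝ) := by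
    have h2L : (2:ℝ) ≤ 2/Real.log 2 * L := by
      rw [div_mul_eq_mul_div, le_div_iff₀ hl2]
      nlinarith
    calc (n2:ℝ) + n1 ≤ ((k:ℝ) * L / Real.log (4/3) + 1) + (L / Real.log (11/8) + 1) := by
          linarith
      _ = (1/Real.log (11/8) + k/Real.log (4/3)) * L + 2 := by ring
      _ ≤ (1/Real.log (11/8) + k/Real.log (4/3)) * L + 2/Real.log 2 * L := by linarith
      _ = (1/Real.log (11/8) + k/Real.log (4/3) + 2/Real.log 2) * L := by ring
      _ ≤ n := hn
  have hsumnat : n2 + n1 ≤ n := by exact_mod_cast hsum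
  set x := 1/2 + ε with hxdef
  have hx1 : 1/2 ≤ x := by simp [hxdef]; linarith
  have hx2 : x ≤ 1 := by simp [hxdef]; linarith
  -- Phase 1: after n1 steps we are at least 3/4
  have h34 : 3/4 ≤ gmaj^[n1] x := by
    rcases phase1_iter hε.le (le_of_eq hxdef.symm) hx2 n1 with h | h
    · exact h
    · -- (11/8)^n1 * ε ≥ 1
      have hpow : ((11:ℝ)/8)^n1 = Real.exp ((n1 : ℝ) * Real.log (11/8)) := by
        rw [Real.exp_nat_mul, Real.exp_log (by norm_num : (0:ℝ) < 11/8)]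
      have hge : Real.exp L ≤ ((11:ℝ)/8)^n1 := by
        rw [hpow]
        apply Real.exp_le_exp.mpr
        rw [div_le_iff₀ hc1] at hn1ge
        linarith
      have hexpL : Real.exp L = ε⁻¹ := by
        rw [hLeq, Real.exp_neg, Real.exp_log hε]
      have h1le : (1:ℝ) ≤ (11/8)^n1 * ε := by
        have := mul_le_mul_of_nonneg_right hge hε.le
        rw [hexpL, inv_mul_cancel₀ hε.ne'] at this
        exact this
      linarith
  have hle1 : gmaj^[n1] x ≤ 1 := (gmaj_iter_inv x hx1 hx2 n1).2
  -- Phase 2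
  have hpow2 : ((3:ℝ)/4)^n2 ≤ ε ^ k := by
    have hlog34 : Real.log ((3:ℝ)/4) = -Real.log (4/3) := by
      rw [show ((3:ℝ)/4) = ((4:ℝ)/3)⁻¹ by norm_num, Real.log_inv]
    have hpow : ((3:ℝ)/4)^n2 = Real.exp (-((n2 : ℝ) * Real.log (4/3))) := by
      have heq : -((n2:ℝ) * Real.log (4/3)) = (n2:ℝ) * Real.log ((3:ℝ)/4) := by
        rw [hlog34]; ring
      rw [heq, Real.exp_nat_mul, Real.exp_log (by norm_num : (0:ℝ) < 3/4)]
    have hεk : ε ^ k = Real.exp (-((k:ℝ) * L)) := by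
      have heq : -((k:ℝ) * L) = (k:ℝ) * Real.log ε := by rw [hLeq]; ring
      rw [heq, Real.exp_nat_mul, Real.exp_log hε]
    rw [hpow, hεk]
    apply Real.exp_le_exp.mpr
    rw [div_le_iff₀ hc2] at hn2ge
    linarith
  obtain ⟨_, _, hfinal⟩ := phase2_iter h34 hle1 n2
  have hεk0 : 0 ≤ ε ^ k := by positivity
  have hkey : 1 - ε ^ k ≤ gmaj^[n2 + n1] x := by
    rw [Function.iterate_add_apply]
    have hgap : 1 - gmaj^[n1] x ≤ 1 := by linarith [(gmaj_iter_inv x hx1 hx2 n1).1]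
    have hgapnn : 0 ≤ 1 - gmaj^[n1] x := by linarith
    have : (3/4:ℝ)^n2 * (1 - gmaj^[n1] x) ≤ ε ^ k := by
      calc (3/4:ℝ)^n2 * (1 - gmaj^[n1] x) ≤ (3/4:ℝ)^n2 * 1 := by
            apply mul_le_mul_of_nonneg_left hgap (by positivity)
        _ ≤ ε ^ k := by rw [mul_one]; exact hpow2
    linarith [hfinal.trans this]
  calc 1 - ε ^ k ≤ gmaj^[n2 + n1] x := hkey
    _ ≤ gmaj^[n] x := gmaj_iter_mono x hx1 hx2 hsumnat
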